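/- Let g : ℝ⁺ → ℝ⁺ satisfy lim_{x→∞} g(x+w)/g(x) = 1 for all w > 0. Suppose f : ℝ⁺ → ℝ⁺ satisfies f(x+1) = g(x) f(x) for x > 0, f(1) = 1, and f is eventually log-concave of order two (log f is 2-concave on some (M,∞)). Then f(x) = lim_{n→∞} [g(n)⋯g(1) g(n)^x] / [g(n+x)⋯g(x)] for all x > 0. -/

import Mathlib

/-!
Write `F = log f` and `G = log g`, so that `F (y + 1) = F y + G y` and `G (y + 1) - G y → 0`.
The second divided difference of `F` at `y, y + 1, y + 2` is `(G (y + 1) - G y) / 2 → 0`, and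
concavity of order two makes three-point divided differences decrease as the window slides right;
so for `0 < t < 1` the divided difference at `y, y + t, y + 1` is squeezed between two such values
and tends to `0`. Newton interpolation then gives `F (y + t) - F y - t * G y → 0`, and the
functional equation extends this to all `t ≥ 0`. Finally the `n`-th term of the sequence is
`f x * exp (-(F (n + 1 + x) - F (n + 1) - x * G n))`, and this exponent is `E (x + 1) n - E 1 n`
for `E t y = F (y + t) - F y - t * G y`.
-/

open Filter Finset Real

/-- Divided difference of `h` at the points `x 0, …, x (m-1)` (assumed pairwise distinct),
via the Lagrange formula. -/
noncomputable def divDiff (h : ℝ → ℝ) {m : ℕ} (x : Fin m → ℝ) : ℝ :=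
  ∑ i, h (x i) / ∏ j ∈ Finset.univ.erase i, (x i - x j)

/-- `h` is convex of order `n` on `I` : all divided differences at `n+2` increasing
points of `I` are nonnegative. -/
def NConvexOn (n : ℕ) (I : Set ℝ) (h : ℝ → ℝ) : Prop :=
  ∀ x : Fin (n + 2) → ℝ, StrictMono x → (∀ i, x i ∈ I) → 0 ≤ divDiff h x

/-- `h` is concave of order `n` on `I` if `-h` is convex of order `n` on `I`. -/
def NConcaveOn (n : ℕ) (I : Set ℝ) (h : ℝ → ℝ) : Prop :=
  NConvexOn n I (fun t => -h t)

noncomputable def gammaTypeSeq (g : ℝ → ℝ) (x : ℝ) (n : ℕ) : ℝ :=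
  ((∏ k ∈ Finset.Icc 1 n, g k) * g n ^ x) / ∏ k ∈ Finset.range (n + 1), g (x + k)

section DividedDifferences

theorem divDiff_three (F : ℝ → ℝ) (a b c : ℝ) :
    divDiff F ![a, b, c] = F a / ((a - b) * (a - c)) + F b / ((b - a) * (b - c))
      + F c / ((c - a) * (c - b)) := by
  have h0 : univ.erase (0 : Fin 3) = {1, 2} := by decide
  have h1 : univ.erase (1 : Fin 3) = {0, 2} := by decide
  have h2 : univ.erase (2 : Fin 3) = {0, 1} := by decide
  simp [divDiff, Fin.sum_univ_three, h0, h1, h2]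

theorem divDiff_four (F : ℝ → ℝ) (a b c d : ℝ) :
    divDiff F ![a, b, c, d] = F a / ((a - b) * ((a - c) * (a - d)))
      + F b / ((b - a) * ((b - c) * (b - d)))
      + F c / ((c - a) * ((c - b) * (c - d)))
      + F d / ((d - a) * ((d - b) * (d - c))) := by
  have h0 : univ.erase (0 : Fin 4) = {1, 2, 3} := by decide
  have h1 : univ.erase (1 : Fin 4) = {0, 2, 3} := by decide
  have h2 : univ.erase (2 : Fin 4) = {0, 1, 3} := by decide
  have h3 : univ.erase (3 : Fin 4) = {0, 1, 2} := by decide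
  simp [divDiff, Fin.sum_univ_four, h0, h1, h2, h3]

theorem divDiff_neg (F : ℝ → ℝ) {m : ℕ} (x : Fin m → ℝ) :
    divDiff (fun t => -F t) x = -divDiff F x := by
  simp only [divDiff, neg_div, sum_neg_distrib]

theorem sub_mul_divDiff_four (F : ℝ → ℝ) {a b c d : ℝ} (hab : a < b) (hbc : b < c)
    (hcd : c < d) :
    (d - a) * divDiff F ![a, b, c, d] = divDiff F ![b, c, d] - divDiff F ![a, b, c] := by
  have hac := hab.trans hbc
  have hbd := hbc.trans hcd
  have had := hab.trans hbd
  rw [divDiff_four, divDiff_three, divDiff_three]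
  field_simp [(sub_pos.2 hab).ne', (sub_pos.2 hac).ne', (sub_pos.2 had).ne', (sub_pos.2 hbc).ne',
    (sub_pos.2 hbd).ne', (sub_pos.2 hcd).ne', (sub_neg.2 hab).ne, (sub_neg.2 hac).ne,
    (sub_neg.2 had).ne, (sub_neg.2 hbc).ne, (sub_neg.2 hbd).ne, (sub_neg.2 hcd).ne]
  ring

/-- Newton's form of quadratic interpolation of `F` at `a, b, c`, evaluated at `b`. -/
theorem sub_eq_mul_slope_add_mul_divDiff (F : ℝ → ℝ) {a b c : ℝ} (hab : a < b) (hbc : b < c) :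
    F b - F a = (b - a) * (F c - F a) / (c - a) + (b - a) * (b - c) * divDiff F ![a, b, c] := by
  have hac := hab.trans hbc
  rw [divDiff_three]
  field_simp [(sub_pos.2 hab).ne', (sub_pos.2 hac).ne', (sub_pos.2 hbc).ne', (sub_neg.2 hab).ne,
    (sub_neg.2 hac).ne, (sub_neg.2 hbc).ne]
  ring

theorem NConcaveOn.divDiff_three_le {I : Set ℝ} [I.OrdConnected] {F : ℝ → ℝ}
    (hF : NConcaveOn 2 I F) {a b c d : ℝ} (ha : a ∈ I) (hd : d ∈ I) (hab : a < b) (hbc : b < c)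
    (hcd : c < d) : divDiff F ![b, c, d] ≤ divDiff F ![a, b, c] := by
  have hmono : StrictMono ![a, b, c, d] := by
    simp [strictMono_vecCons, hab, hbc, hcd]
  have hmem : ∀ i, ![a, b, c, d] i ∈ I := fun i =>
    Set.OrdConnected.out' ha hd ⟨hmono.monotone (Fin.zero_le i), hmono.monotone (Fin.le_last i)⟩
  have h4 := hF _ hmono hmem
  rw [divDiff_neg] at h4
  have := sub_mul_divDiff_four F hab hbc hcd
  nlinarith [sub_pos.2 (hab.trans (hbc.trans hcd))]

end DividedDifferences

section AdditiveFunctionalEquation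

variable {F G : ℝ → ℝ}

theorem tendsto_divDiff_add_one_add_two (hFG : ∀ᶠ y in atTop, F (y + 1) = F y + G y)
    (hG : Tendsto (fun y => G (y + 1) - G y) atTop (nhds 0)) :
    Tendsto (fun y => divDiff F ![y, y + 1, y + 2]) atTop (nhds 0) := by
  have hFG' : ∀ᶠ y in atTop, F (y + 1 + 1) = F (y + 1) + G (y + 1) :=
    (tendsto_atTop_add_const_right atTop 1 tendsto_id).eventually hFG
  refine (zero_div (2 : ℝ) ▸ hG.div_const 2).congr' ?_
  filter_upwards [hFG, hFG'] with y h₁ h₂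
  rw [divDiff_three, show y + 2 = y + 1 + 1 by ring, h₂, h₁]
  ring

theorem tendsto_divDiff_of_nConcaveOn {M t : ℝ} (hF : NConcaveOn 2 (Set.Ioi M) F)
    (hD : Tendsto (fun y => divDiff F ![y, y + 1, y + 2]) atTop (nhds 0)) (ht₀ : 0 < t)
    (ht₁ : t < 1) : Tendsto (fun y => divDiff F ![y, y + t, y + 1]) atTop (nhds 0) := by
  have hD' : Tendsto (fun y => divDiff F ![y - 2, y - 1, y]) atTop (nhds 0) :=
    (hD.comp (tendsto_atTop_add_const_right atTop (-2) tendsto_id)).congr fun y => by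
      simp only [Function.comp, id]
      ring_nf
  have hD'' : Tendsto (fun y => divDiff F ![y + 1, y + 2, y + 3]) atTop (nhds 0) :=
    (hD.comp (tendsto_atTop_add_const_right atTop 1 tendsto_id)).congr fun y => by
      simp only [Function.comp, id]
      ring_nf
  refine tendsto_of_tendsto_of_tendsto_of_le_of_le' hD'' hD' ?_ ?_
  all_goals filter_upwards [eventually_gt_atTop (M + 2)] with y hy
  · calc divDiff F ![y + 1, y + 2, y + 3] ≤ divDiff F ![y + t, y + 1, y + 2] :=
          hF.divDiff_three_le (Set.mem_Ioi.2 (by linarith)) (Set.mem_Ioi.2 (by linarith))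
            (by linarith) (by linarith) (by linarith)
      _ ≤ divDiff F ![y, y + t, y + 1] :=
          hF.divDiff_three_le (Set.mem_Ioi.2 (by linarith)) (Set.mem_Ioi.2 (by linarith))
            (by linarith) (by linarith) (by linarith)
  · calc divDiff F ![y, y + t, y + 1] ≤ divDiff F ![y - 1, y, y + t] :=
          hF.divDiff_three_le (Set.mem_Ioi.2 (by linarith)) (Set.mem_Ioi.2 (by linarith))
            (by linarith) (by linarith) (by linarith)
      _ ≤ divDiff F ![y - 2, y - 1, y] :=
          hF.divDiff_three_le (Set.mem_Ioi.2 (by linarith)) (Set.mem_Ioi.2 (by linarith))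
            (by linarith) (by linarith) (by linarith)

theorem tendsto_sub_sub_mul_of_mem_Ico {M t : ℝ} (hF : NConcaveOn 2 (Set.Ioi M) F)
    (hFG : ∀ᶠ y in atTop, F (y + 1) = F y + G y)
    (hG : Tendsto (fun y => G (y + 1) - G y) atTop (nhds 0)) (ht : t ∈ Set.Ico 0 1) :
    Tendsto (fun y => F (y + t) - F y - t * G y) atTop (nhds 0) := by
  rcases ht.1.eq_or_lt with rfl | ht₀
  · simp
  have hD := tendsto_divDiff_of_nConcaveOn hF (tendsto_divDiff_add_one_add_two hFG hG) ht₀ ht.2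
  refine (mul_zero (t * (t - 1)) ▸ hD.const_mul (t * (t - 1))).congr' ?_
  filter_upwards [hFG] with y hy
  have h := sub_eq_mul_slope_add_mul_divDiff F (a := y) (b := y + t) (c := y + 1)
    (by linarith) (by linarith [ht.2])
  rw [hy] at h
  simp only [add_sub_cancel_left, add_sub_add_left_eq_sub, div_one] at h
  linear_combination -h

theorem Filter.Tendsto.sub_sub_mul_add_one {x : ℝ}
    (hx : Tendsto (fun y => F (y + x) - F y - x * G y) atTop (nhds 0))
    (hFG : ∀ᶠ y in atTop, F (y + 1) = F y + G y)
    (hG : Tendsto (fun y => G (y + 1) - G y) atTop (nhds 0)) :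
    Tendsto (fun y => F (y + (x + 1)) - F y - (x + 1) * G y) atTop (nhds 0) := by
  have hx' := hx.comp (tendsto_atTop_add_const_right atTop 1 tendsto_id)
  have h := (hx'.add (hG.const_mul x)).add (tendsto_const_nhds (x := (0 : ℝ)))
  simp only [mul_zero, add_zero] at h
  refine h.congr' ?_
  filter_upwards [hFG] with y hy
  simp only [Function.comp, id]
  rw [show y + (x + 1) = y + 1 + x by ring, hy]
  ring

theorem tendsto_sub_sub_mul_of_nConcaveOn {M x : ℝ} (hF : NConcaveOn 2 (Set.Ioi M) F)
    (hFG : ∀ᶠ y in atTop, F (y + 1) = F y + G y)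
    (hG : Tendsto (fun y => G (y + 1) - G y) atTop (nhds 0)) (hx : 0 ≤ x) :
    Tendsto (fun y => F (y + x) - F y - x * G y) atTop (nhds 0) := by
  have hfract : x - ⌊x⌋₊ ∈ Set.Ico 0 1 :=
    ⟨sub_nonneg.2 (Nat.floor_le hx), by linarith [Nat.lt_floor_add_one x]⟩
  have key : ∀ n : ℕ,
      Tendsto (fun y => F (y + (x - ⌊x⌋₊ + n)) - F y - (x - ⌊x⌋₊ + n) * G y) atTop (nhds 0) := by
    intro n
    induction n with
    | zero => simpa using tendsto_sub_sub_mul_of_mem_Ico hF hFG hG hfract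
    | succ n ih => simpa only [Nat.cast_succ, ← add_assoc] using ih.sub_sub_mul_add_one hFG hG
  simpa using key ⌊x⌋₊

end AdditiveFunctionalEquation

section GammaTypeSequence

variable {f g : ℝ → ℝ}

theorem eq_mul_prod_range_of_add_one (hfe : ∀ x > 0, f (x + 1) = g x * f x) {x : ℝ}
    (hx : 0 < x) (n : ℕ) : f (x + n) = f x * ∏ k ∈ range n, g (x + k) := by
  induction n with
  | zero => simp
  | succ n ih =>
    rw [Nat.cast_succ, ← add_assoc, hfe _ (by positivity), ih, prod_range_succ]
    ring

theorem eq_prod_Icc_of_add_one (hfe : ∀ x > 0, f (x + 1) = g x * f x) (hf1 : f 1 = 1) (n : ℕ) :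
    f (n + 1) = ∏ k ∈ Icc 1 n, g k := by
  induction n with
  | zero => simpa using hf1
  | succ n ih =>
    rw [prod_Icc_succ_top (by omega), ← ih, Nat.cast_succ, hfe _ (by positivity)]
    ring

theorem gammaTypeSeq_eq_mul_exp (hg : ∀ x > 0, 0 < g x) (hf : ∀ x > 0, 0 < f x)
    (hfe : ∀ x > 0, f (x + 1) = g x * f x) (hf1 : f 1 = 1) {x : ℝ} (hx : 0 < x) {n : ℕ}
    (hn : 1 ≤ n) :
    gammaTypeSeq g x n =
      f x * exp (-(log (f (n + (x + 1))) - log (f (n + 1)) - x * log (g n))) := by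
  have hgn : 0 < g n := hg _ (by exact_mod_cast hn)
  have hxn : f (n + (x + 1)) = f x * ∏ k ∈ range (n + 1), g (x + k) := by
    rw [← eq_mul_prod_range_of_add_one hfe hx, Nat.cast_succ]
    ring_nf
  rw [gammaTypeSeq, ← eq_prod_Icc_of_add_one hfe hf1,
    show -(log (f (n + (x + 1))) - log (f (n + 1)) - x * log (g n))
      = log (f (n + 1)) + log (g n) * x - log (f (n + (x + 1))) by ring,
    exp_sub, exp_add, exp_log (hf _ (by positivity)), exp_log (hf _ (by positivity)),
    ← rpow_def_of_pos hgn, hxn]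
  field_simp [(hf x hx).ne']

end GammaTypeSequence

theorem uniqueness_of_second_order_logConcave_solution (g f : ℝ → ℝ)
    (hg : ∀ x > 0, 0 < g x) (hf : ∀ x > 0, 0 < f x)
    (hasym : ∀ w > 0, Tendsto (fun x : ℝ => g (x + w) / g x) atTop (nhds 1))
    (hconc2 : ∃ M : ℝ, NConcaveOn 2 (Set.Ioi M) (fun x => Real.log (f x)))
    (hfe : ∀ x > 0, f (x + 1) = g x * f x)
    (hf1 : f 1 = 1) :
    ∀ x > 0, Tendsto (gammaTypeSeq g x) atTop (nhds (f x)) := by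
  intro x hx
  obtain ⟨M, hM⟩ := hconc2
  have hFG : ∀ᶠ y in atTop, log (f (y + 1)) = log (f y) + log (g y) := by
    filter_upwards [eventually_gt_atTop 0] with y hy
    rw [hfe y hy, log_mul (hg y hy).ne' (hf y hy).ne', add_comm]
  have hG : Tendsto (fun y => log (g (y + 1)) - log (g y)) atTop (nhds 0) := by
    refine (log_one ▸ (hasym 1 one_pos).log one_ne_zero).congr' ?_
    filter_upwards [eventually_gt_atTop 0] with y hy
    exact log_div (hg _ (by linarith)).ne' (hg y hy).ne'
  have hE := (tendsto_sub_sub_mul_of_nConcaveOn hM hFG hG (by positivity : 0 ≤ x + 1)).sub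
    (tendsto_sub_sub_mul_of_nConcaveOn hM hFG hG zero_le_one)
  have hlim := ((hE.comp tendsto_natCast_atTop_atTop).neg.rexp.const_mul (f x))
  simp only [sub_zero, neg_zero, exp_zero, mul_one] at hlim
  refine hlim.congr' ?_
  filter_upwards [eventually_ge_atTop 1] with n hn
  rw [gammaTypeSeq_eq_mul_exp hg hf hfe hf1 hx hn, Function.comp_apply]
  ring_nf
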